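/- Let 0 < r_1 ≤ r_2 ≤ ... ≤ r_L ≤ d and let V_1, ..., V_L ⊆ ℝ^d be linear subspaces with dim V_i = r_i, with orthogonal projectors P_{V_i}. Then the cumulative drift functional D(V_1,...,V_L) = Σ_{i=1}^{L−1} ‖P_{V_{i+1}} − P_{V_i}‖_F² satisfies D(V_1,...,V_L) ≥ Σ_{i=1}^{L−1} (r_{i+1} − r_i), and equality holds if and only if V_1 ⊆ V_2 ⊆ ... ⊆ V_L (a flag-structured configuration). -/
import Mathlib


/-- The squared Frobenius norm of a real matrix: `‖A‖_F² = ∑ i j, (A i j)²`. -/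
noncomputable def frobSq {m n : Type*} [Fintype m] [Fintype n]
    (A : Matrix m n ℝ) : ℝ :=
  ∑ i, ∑ j, (A i j) ^ 2

/-- `P` is the orthogonal projector (symmetric idempotent matrix) onto the
subspace `V ⊆ ℝ^d`, i.e. its column space is `V`. -/
def IsOrthProj {d : ℕ} (P : Matrix (Fin d) (Fin d) ℝ)
    (V : Submodule ℝ (Fin d → ℝ)) : Prop :=
  P.IsSymm ∧ P * P = P ∧ LinearMap.range P.mulVecLin = V

open Matrix in
lemma frobSq_eq_trace {n : Type*} [Fintype n] (A : Matrix n n ℝ) :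
    frobSq A = Matrix.trace (A * Aᵀ) := by
  simp [frobSq, Matrix.trace, Matrix.mul_apply, sq, Matrix.diag]

lemma frobSq_nonneg {m n : Type*} [Fintype m] [Fintype n] (A : Matrix m n ℝ) :
    0 ≤ frobSq A :=
  Finset.sum_nonneg fun _ _ => Finset.sum_nonneg fun _ _ => sq_nonneg _

lemma frobSq_eq_zero {m n : Type*} [Fintype m] [Fintype n] (A : Matrix m n ℝ) :
    frobSq A = 0 ↔ A = 0 := by
  constructor
  · intro h
    ext i j
    have h1 : ∀ i ∈ Finset.univ, (0:ℝ) ≤ ∑ j, (A i j)^2 :=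
      fun _ _ => Finset.sum_nonneg fun _ _ => sq_nonneg _
    have := (Finset.sum_eq_zero_iff_of_nonneg h1).mp h i (Finset.mem_univ i)
    have := (Finset.sum_eq_zero_iff_of_nonneg (fun _ _ => sq_nonneg _)).mp this j
      (Finset.mem_univ j)
    simpa using pow_eq_zero_iff (n := 2) (by norm_num) |>.mp this
  · intro h; simp [h, frobSq]

lemma trace_proj {d : ℕ} (P : Matrix (Fin d) (Fin d) ℝ) (hidem : P * P = P) :
    Matrix.trace P = (Module.finrank ℝ (LinearMap.range P.mulVecLin) : ℝ) := by
  have hf : P.mulVecLin ∘ₗ P.mulVecLin = P.mulVecLin := by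
    rw [← Matrix.mulVecLin_mul, hidem]
  have hproj : LinearMap.IsProj (LinearMap.range P.mulVecLin) P.mulVecLin := by
    constructor
    · intro x; exact LinearMap.mem_range_self _ x
    · rintro x ⟨y, rfl⟩
      exact congrFun (congrArg DFunLike.coe hf) y
  have := hproj.trace
  rw [← this]
  rw [LinearMap.trace_eq_matrix_trace ℝ (Pi.basisFun ℝ (Fin d))]
  congr 1
  ext i j
  simp [LinearMap.toMatrix_apply, Matrix.mulVecLin, Matrix.mulVec_single]

lemma mulVec_ext {d : ℕ} {M N : Matrix (Fin d) (Fin d) ℝ}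
    (h : ∀ v, M.mulVec v = N.mulVec v) : M = N := by
  ext i j
  have := congrFun (h (Pi.single j 1)) i
  simpa [Matrix.mulVec_single] using this

section pair
open Matrix
variable {d : ℕ} {P Q : Matrix (Fin d) (Fin d) ℝ}
  (hPs : P.IsSymm) (hPi : P * P = P) (hQs : Q.IsSymm) (hQi : Q * Q = Q)

include hPs hPi hQs hQi in
lemma drift_eq :
    frobSq (Q - P) = Matrix.trace Q - Matrix.trace P + 2 * frobSq (P * (1 - Q)) := by
  have hQPs : (Q - P)ᵀ = Q - P := by
    rw [Matrix.transpose_sub, hPs.eq, hQs.eq]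
  have h1 : frobSq (Q - P) = Matrix.trace Q + Matrix.trace P - 2 * Matrix.trace (P * Q) := by
    rw [frobSq_eq_trace, hQPs]
    have : (Q - P) * (Q - P) = Q * Q - Q * P - P * Q + P * P := by noncomm_ring
    rw [this, hPi, hQi]
    simp only [Matrix.trace_add, Matrix.trace_sub]
    rw [Matrix.trace_mul_comm Q P]
    ring
  have h2 : frobSq (P * (1 - Q)) = Matrix.trace P - Matrix.trace (P * Q) := by
    rw [frobSq_eq_trace]
    have hs : (1 - Q)ᵀ = 1 - Q := by rw [Matrix.transpose_sub, Matrix.transpose_one, hQs.eq]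
    have hi : (1 - Q) * (1 - Q) = 1 - Q := by noncomm_ring [hQi]
    rw [Matrix.transpose_mul, hs, hPs.eq]
    have key : P * (1 - Q) * ((1 - Q) * P) = P * (1 - Q) * P := by
      rw [Matrix.mul_assoc, ← Matrix.mul_assoc (1 - Q) (1 - Q) P, hi, ← Matrix.mul_assoc]
    rw [key, Matrix.trace_mul_comm, ← Matrix.mul_assoc, hPi, Matrix.mul_sub, Matrix.mul_one]
    simp [Matrix.trace_sub]
  rw [h1, h2]; ring

include hPs hQs hQi in
lemma drift_flag_iff :
    P * (1 - Q) = 0 ↔ LinearMap.range P.mulVecLin ≤ LinearMap.range Q.mulVecLin := by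
  have h1 : P * (1 - Q) = 0 ↔ Q * P = P := by
    rw [Matrix.mul_sub, Matrix.mul_one, sub_eq_zero]
    constructor
    · intro h
      have := congrArg Matrix.transpose h
      simpa [Matrix.transpose_mul, hPs.eq, hQs.eq] using this.symm
    · intro h
      have := congrArg Matrix.transpose h
      simpa [Matrix.transpose_mul, hPs.eq, hQs.eq] using this.symm
  rw [h1]
  constructor
  · rintro h x ⟨y, rfl⟩
    refine ⟨P.mulVec y, ?_⟩
    show Q.mulVec (P.mulVec y) = P.mulVecLin y
    rw [Matrix.mulVec_mulVec, h]; rfl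
  · intro h
    apply mulVec_ext
    intro v
    obtain ⟨z, hz⟩ := h (LinearMap.mem_range_self P.mulVecLin v)
    have hz' : Q.mulVec z = P.mulVec v := hz
    calc (Q * P).mulVec v = Q.mulVec (P.mulVec v) := by rw [← Matrix.mulVec_mulVec]
      _ = Q.mulVec (Q.mulVec z) := by rw [hz']
      _ = (Q * Q).mulVec z := by rw [Matrix.mulVec_mulVec]
      _ = P.mulVec v := by rw [hQi, hz']
end pair

/-- **Minimal cumulative drift.** For subspaces `V 0, …, V L ⊆ ℝ^d` with
`0 < r 0 ≤ ⋯ ≤ r L ≤ d` and `dim (V i) = r i`, the cumulative drift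
`∑ i, ‖P_{V (i+1)} − P_{V i}‖_F²` is at least `∑ i, (r (i+1) − r i)`,
with equality iff the configuration is a flag `V 0 ⊆ V 1 ⊆ ⋯ ⊆ V L`. -/
theorem stmt5 {d L : ℕ} (r : Fin (L + 1) → ℕ)
    (hr0 : 0 < r 0) (hmono : Monotone r) (hrd : r (Fin.last L) ≤ d)
    (V : Fin (L + 1) → Submodule ℝ (Fin d → ℝ))
    (P : Fin (L + 1) → Matrix (Fin d) (Fin d) ℝ)
    (hdim : ∀ i, Module.finrank ℝ (V i) = r i)
    (hP : ∀ i, IsOrthProj (P i) (V i)) :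
    (∑ i : Fin L, frobSq (P i.succ - P i.castSucc))
      ≥ ∑ i : Fin L, ((r i.succ : ℝ) - (r i.castSucc : ℝ)) ∧
    ((∑ i : Fin L, frobSq (P i.succ - P i.castSucc))
        = ∑ i : Fin L, ((r i.succ : ℝ) - (r i.castSucc : ℝ)) ↔
      ∀ i : Fin L, V i.castSucc ≤ V i.succ) := by
  have htr : ∀ j, Matrix.trace (P j) = (r j : ℝ) := by
    intro j
    rw [trace_proj (P j) (hP j).2.1, (hP j).2.2, hdim j]
  have hkey : ∀ i : Fin L, frobSq (P i.succ - P i.castSucc)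
      = ((r i.succ : ℝ) - (r i.castSucc : ℝ))
        + 2 * frobSq (P i.castSucc * (1 - P i.succ)) := by
    intro i
    rw [drift_eq (hP i.castSucc).1 (hP i.castSucc).2.1 (hP i.succ).1 (hP i.succ).2.1,
      htr, htr]
  have hle : ∀ i ∈ (Finset.univ : Finset (Fin L)), ((r i.succ : ℝ) - (r i.castSucc : ℝ))
      ≤ frobSq (P i.succ - P i.castSucc) := by
    intro i _
    rw [hkey i]
    nlinarith [frobSq_nonneg (P i.castSucc * (1 - P i.succ))]
  constructor
  · exact Finset.sum_le_sum hle
  · rw [eq_comm, Finset.sum_eq_sum_iff_of_le hle]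
    constructor
    · intro h i
      have hi := (h i (Finset.mem_univ i)).symm
      rw [hkey i] at hi
      have h0 : frobSq (P i.castSucc * (1 - P i.succ)) = 0 := by linarith
      have := (drift_flag_iff (hP i.castSucc).1 (hP i.succ).1 (hP i.succ).2.1).mp
        ((frobSq_eq_zero _).mp h0)
      rwa [(hP i.castSucc).2.2, (hP i.succ).2.2] at this
    · intro h i _
      have hflag : LinearMap.range (P i.castSucc).mulVecLin
          ≤ LinearMap.range (P i.succ).mulVecLin := by
        rw [(hP i.castSucc).2.2, (hP i.succ).2.2]; exact h i
      have h0 := (drift_flag_iff (hP i.castSucc).1 (hP i.succ).1 (hP i.succ).2.1).mpr hflag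
      rw [hkey i, (frobSq_eq_zero _).mpr h0]
      ring
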